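/- Define f : [0,1] → 2^[0,1] by f(x) = {0} for 0 ≤ x < 1 and f(1) = [0,1]. Then f is upper semicontinuous, has the weak intermediate value property, does not have the intermediate value property, and is not almost nonfissile (the nonfissile points of the graph are not dense in the graph), even though the set of x with f(x) a singleton is a dense G_δ subset of [0,1]. -/

import Mathlib

open Set Filter Topology

/-- The graph of a set-valued function on `[0,1]`. -/
def GraphOn01 (f : ℝ → Set ℝ) : Set (ℝ × ℝ) :=
  {p | p.1 ∈ Icc (0:ℝ) 1 ∧ p.2 ∈ f p.1}

/-- Upper semicontinuous set-valued function `[0,1] → 2^[0,1]`: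
nonempty compact values inside `[0,1]` and closed graph. -/
def USC (f : ℝ → Set ℝ) : Prop :=
  (∀ x ∈ Icc (0:ℝ) 1, (f x).Nonempty ∧ f x ⊆ Icc (0:ℝ) 1 ∧ IsCompact (f x)) ∧
    IsClosed (GraphOn01 f)

/-- The intermediate value property. -/
def IVP (f : ℝ → Set ℝ) : Prop :=
  ∀ x₁ ∈ Icc (0:ℝ) 1, ∀ x₂ ∈ Icc (0:ℝ) 1, x₁ ≠ x₂ →
    ∀ y₁ ∈ f x₁, ∀ y₂ ∈ f x₂, y₁ ≠ y₂ →
      ∀ y ∈ Ioo (min y₁ y₂) (max y₁ y₂),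
        ∃ x ∈ Ioo (min x₁ x₂) (max x₁ x₂), y ∈ f x

/-- The weak intermediate value property. -/
def WIVP (f : ℝ → Set ℝ) : Prop :=
  ∀ x₁ ∈ Icc (0:ℝ) 1, ∀ x₂ ∈ Icc (0:ℝ) 1, x₁ ≠ x₂ →
    ∀ y₁ ∈ f x₁, ∃ y₂ ∈ f x₂,
      ∀ y ∈ Icc (min y₁ y₂) (max y₁ y₂),
        ∃ x ∈ Icc (min x₁ x₂) (max x₁ x₂), y ∈ f x

/-- Weak continuity (from the left and the right) at each interior point. -/
def WeakCont (f : ℝ → Set ℝ) : Prop :=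
  ∀ x ∈ Ioo (0:ℝ) 1, ∀ y ∈ f x,
    (∃ u : ℕ → ℝ × ℝ, (∀ k, u k ∈ GraphOn01 f ∧ (u k).1 < x) ∧
      Tendsto u atTop (𝓝 (x, y))) ∧
    (∃ u : ℕ → ℝ × ℝ, (∀ k, u k ∈ GraphOn01 f ∧ x < (u k).1) ∧
      Tendsto u atTop (𝓝 (x, y)))

/-- `f` is almost nonfissile: the nonfissile points of the graph are dense in the graph. -/
def AlmostNonfissile (f : ℝ → Set ℝ) : Prop :=
  GraphOn01 f ⊆ closure {p | p ∈ GraphOn01 f ∧ f p.1 = {p.2}}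

/-- `f` is light: each fiber `{x : y ∈ f x}` has empty interior in `[0,1]`. -/
def Light (f : ℝ → Set ℝ) : Prop :=
  ∀ y : ℝ, ∀ U : Set ℝ, IsOpen U → (U ∩ Icc (0:ℝ) 1).Nonempty →
    ∃ x ∈ U ∩ Icc (0:ℝ) 1, y ∉ f x

/-- `f` is surjective onto `[0,1]`. -/
def Surj (f : ℝ → Set ℝ) : Prop :=
  ∀ y ∈ Icc (0:ℝ) 1, ∃ x ∈ Icc (0:ℝ) 1, y ∈ f x

/-- The `n`-fold set-valued composition of `f`. -/
def fIter (f : ℝ → Set ℝ) : ℕ → ℝ → Set ℝ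
  | 0, x => {x}
  | n + 1, x => ⋃ z ∈ fIter f n x, f z

/-- The image `f^n[A] = ⋃_{a ∈ A} f^n(a)`. -/
def imIter (f : ℝ → Set ℝ) (n : ℕ) (A : Set ℝ) : Set ℝ :=
  ⋃ a ∈ A, fIter f n a

/-- The inverse limit of the single bonding function `f` on `[0,1]`. -/
def InvLim (f : ℝ → Set ℝ) : Set (ℕ → ℝ) :=
  {z | (∀ i, z i ∈ Icc (0:ℝ) 1) ∧ ∀ i, z i ∈ f (z (i + 1))}

/-- `X` is irreducible between `x` and `y`: the only subcontinuum of `X`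
containing both is `X` itself. -/
def IrreducibleBetween (X : Set (ℕ → ℝ)) (x y : ℕ → ℝ) : Prop :=
  x ∈ X ∧ y ∈ X ∧
    ∀ K ⊆ X, IsCompact K → IsConnected K → x ∈ K → y ∈ K → K = X

/-!
The graph of `f` is the union of the segments `[0,1] × {0}` and `{1} × [0,1]`, hence closed.
Every value of `f` is an interval containing `0`, so from any `(x₁, y₁)` one reaches `y₂ = 0`
without leaving `f x₁`: this gives the weak intermediate value property. The intermediate value
property fails because strictly between `0` and `1` the function only takes the value `0`, and
for the same reason every nonfissile point lies on the horizontal segment, so `(1, 1)` is not in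
their closure. The single-valued points form `[0,1)`, which is a dense Gδ in `[0,1]`.
-/

lemma wivp_of_ordConnected_of_forall_mem (f : ℝ → Set ℝ) (c : ℝ)
    (hconn : ∀ x ∈ Icc (0:ℝ) 1, (f x).OrdConnected) (hc : ∀ x ∈ Icc (0:ℝ) 1, c ∈ f x) :
    WIVP f := by
  intro x₁ hx₁ x₂ hx₂ _ y₁ hy₁
  exact ⟨c, hc x₂ hx₂, fun y hy =>
    ⟨x₁, ⟨min_le_left _ _, le_max_left _ _⟩, (hconn x₁ hx₁).uIcc_subset hy₁ (hc x₁ hx₁) hy⟩⟩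

def jumpAtOne (x : ℝ) : Set ℝ :=
  if x < 1 then {0} else Icc 0 1

def singleValuedPoints (f : ℝ → Set ℝ) : Set ℝ :=
  {x | x ∈ Icc (0:ℝ) 1 ∧ ∃ y, f x = {y}}

lemma jumpAtOne_of_lt {x : ℝ} (hx : x < 1) : jumpAtOne x = {0} := if_pos hx

lemma jumpAtOne_of_one_le {x : ℝ} (hx : 1 ≤ x) : jumpAtOne x = Icc 0 1 := if_neg hx.not_gt

lemma jumpAtOne_subset_Icc (x : ℝ) : jumpAtOne x ⊆ Icc 0 1 := by
  rcases lt_or_ge x 1 with hx | hx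
  · simp [jumpAtOne_of_lt hx]
  · rw [jumpAtOne_of_one_le hx]

lemma zero_mem_jumpAtOne (x : ℝ) : (0:ℝ) ∈ jumpAtOne x := by
  rcases lt_or_ge x 1 with hx | hx
  · simp [jumpAtOne_of_lt hx]
  · simp [jumpAtOne_of_one_le hx]

lemma ordConnected_jumpAtOne (x : ℝ) : (jumpAtOne x).OrdConnected := by
  rcases lt_or_ge x 1 with hx | hx
  · rw [jumpAtOne_of_lt hx]; exact ordConnected_singleton
  · rw [jumpAtOne_of_one_le hx]; exact ordConnected_Icc

lemma jumpAtOne_eq_singleton_iff {x y : ℝ} : jumpAtOne x = {y} ↔ x < 1 ∧ y = 0 := by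
  rcases lt_or_ge x 1 with hx | hx
  · simp [jumpAtOne_of_lt hx, eq_comm, hx]
  · simp only [jumpAtOne_of_one_le hx, Icc_eq_singleton_iff, hx.not_gt, false_and, iff_false]
    rintro ⟨rfl, h⟩
    exact one_ne_zero h

lemma graphOn01_jumpAtOne :
    GraphOn01 jumpAtOne = Icc (0:ℝ) 1 ×ˢ {0} ∪ {1} ×ˢ Icc (0:ℝ) 1 := by
  ext ⟨x, y⟩
  simp only [GraphOn01, mem_ofPred_eq, mem_union, mem_prod, mem_singleton_iff]
  rcases lt_or_ge x 1 with hx | hx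
  · simp [jumpAtOne_of_lt hx, hx.ne]
  · rw [jumpAtOne_of_one_le hx]
    constructor
    · rintro ⟨hx01, hy⟩
      exact Or.inr ⟨le_antisymm hx01.2 hx, hy⟩
    · rintro (⟨hx01, rfl⟩ | ⟨rfl, hy⟩)
      · exact ⟨hx01, left_mem_Icc.mpr zero_le_one⟩
      · exact ⟨right_mem_Icc.mpr zero_le_one, hy⟩

lemma usc_jumpAtOne : USC jumpAtOne := by
  refine ⟨fun x _ => ⟨⟨0, zero_mem_jumpAtOne x⟩, jumpAtOne_subset_Icc x, ?_⟩, ?_⟩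
  · rcases lt_or_ge x 1 with hx | hx
    · rw [jumpAtOne_of_lt hx]; exact isCompact_singleton
    · rw [jumpAtOne_of_one_le hx]; exact isCompact_Icc
  · rw [graphOn01_jumpAtOne]
    exact (isClosed_Icc.prod isClosed_singleton).union (isClosed_singleton.prod isClosed_Icc)

lemma wivp_jumpAtOne : WIVP jumpAtOne :=
  wivp_of_ordConnected_of_forall_mem _ 0 (fun x _ => ordConnected_jumpAtOne x)
    (fun x _ => zero_mem_jumpAtOne x)

lemma not_ivp_jumpAtOne : ¬ IVP jumpAtOne := by
  intro h
  have h01 : (0:ℝ) ≤ 1 := zero_le_one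
  obtain ⟨x, hx, hmem⟩ := h 0 (left_mem_Icc.mpr h01) 1 (right_mem_Icc.mpr h01) zero_ne_one
    0 (zero_mem_jumpAtOne 0) 1 (by simp [jumpAtOne_of_one_le le_rfl]) zero_ne_one (1/2)
    (by simp only [min_eq_left h01, max_eq_right h01]; norm_num)
  rw [min_eq_left h01, max_eq_right h01] at hx
  rw [jumpAtOne_of_lt hx.2, mem_singleton_iff] at hmem
  norm_num at hmem

lemma not_almostNonfissile_jumpAtOne : ¬ AlmostNonfissile jumpAtOne := by
  intro h
  have h_one_one : ((1:ℝ), (1:ℝ)) ∈ GraphOn01 jumpAtOne := by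
    rw [graphOn01_jumpAtOne]
    exact Or.inr ⟨rfl, right_mem_Icc.mpr zero_le_one⟩
  have h_nonfissile : {p : ℝ × ℝ | p ∈ GraphOn01 jumpAtOne ∧ jumpAtOne p.1 = {p.2}} ⊆
      {p | p.2 = 0} :=
    fun p hp => (jumpAtOne_eq_singleton_iff.mp hp.2).2
  exact one_ne_zero <|
    closure_minimal h_nonfissile (isClosed_eq continuous_snd continuous_const) (h h_one_one)

lemma singleValuedPoints_jumpAtOne : singleValuedPoints jumpAtOne = Ico 0 1 := by
  ext x
  simp only [singleValuedPoints, jumpAtOne_eq_singleton_iff, mem_ofPred_eq, mem_Icc, mem_Ico,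
    exists_eq_right]
  constructor
  · rintro ⟨⟨h0, _⟩, h1⟩; exact ⟨h0, h1⟩
  · rintro ⟨h0, h1⟩; exact ⟨⟨h0, h1.le⟩, h1⟩

lemma isGδ_singleValuedPoints_jumpAtOne : IsGδ (singleValuedPoints jumpAtOne) := by
  rw [singleValuedPoints_jumpAtOne, ← Ici_inter_Iio]
  exact isClosed_Ici.isGδ.inter isOpen_Iio.isGδ

lemma Icc_subset_closure_singleValuedPoints_jumpAtOne :
    Icc 0 1 ⊆ closure (singleValuedPoints jumpAtOne) := by
  rw [singleValuedPoints_jumpAtOne, closure_Ico zero_ne_one]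

/-- `f = {0}` on `[0,1)`, `f(1) = [0,1]` is usc, has the weak IVP,
lacks the IVP, is not almost nonfissile, yet its single-valued points form a
dense Gδ subset of `[0,1]`. -/
theorem stmt12 :
    USC (fun x => if x < (1:ℝ) then ({0} : Set ℝ) else Icc (0:ℝ) 1) ∧
      WIVP (fun x => if x < (1:ℝ) then ({0} : Set ℝ) else Icc (0:ℝ) 1) ∧
      ¬ IVP (fun x => if x < (1:ℝ) then ({0} : Set ℝ) else Icc (0:ℝ) 1) ∧
      ¬ AlmostNonfissile (fun x => if x < (1:ℝ) then ({0} : Set ℝ) else Icc (0:ℝ) 1) ∧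
      IsGδ {x : ℝ | x ∈ Icc (0:ℝ) 1 ∧
        ∃ y, (if x < (1:ℝ) then ({0} : Set ℝ) else Icc (0:ℝ) 1) = {y}} ∧
      Icc (0:ℝ) 1 ⊆ closure {x : ℝ | x ∈ Icc (0:ℝ) 1 ∧
        ∃ y, (if x < (1:ℝ) then ({0} : Set ℝ) else Icc (0:ℝ) 1) = {y}} :=
  ⟨usc_jumpAtOne, wivp_jumpAtOne, not_ivp_jumpAtOne, not_almostNonfissile_jumpAtOne,
    isGδ_singleValuedPoints_jumpAtOne, Icc_subset_closure_singleValuedPoints_jumpAtOne⟩
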